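/- Let M be an n×n real symmetric positive-definite matrix and W an n×k real matrix of rank k with k ≥ 1. Let G = Wᵀ M⁻¹ W and P = I − M⁻¹ W G⁻¹ Wᵀ. Then kinetic energy is NOT preserved for all pre-impact velocities: there exists v ∈ ℝⁿ with (P v)ᵀ M (P v) < vᵀ M v. Consequently, a rigid-body system with at least one active impact constraint of full rank and positive-definite mass matrix cannot conserve kinetic energy across plastic impacts for all velocities. -/

import Mathlib

/-!
The plastic reset `P = 1 - M⁻¹ W G⁻¹ Wᵀ` annihilates every velocity of the form `M⁻¹ W c`,
since `Wᵀ (M⁻¹ W c) = G c`. Full column rank of `W` and invertibility of `M` make such a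
velocity nonzero for `c ≠ 0`, so it carries positive kinetic energy before the impact and
none after it.
-/

open Matrix

theorem Matrix.mulVec_injective_of_rank_eq_card {m n R : Type*} [Fintype n] [CommRing R]
    [Nontrivial R] [StrongRankCondition R] {A : Matrix m n R} (h : A.rank = Fintype.card n) :
    Function.Injective A.mulVec := by
  rw [mulVec_injective_iff, linearIndependent_iff_card_eq_finrank_span, ← h,
    rank_eq_finrank_span_cols]
  rfl

theorem Matrix.one_sub_mul_nonsing_inv_mul_mul_self {n k R : Type*} [Fintype n] [Fintype k]
    [DecidableEq n] [DecidableEq k] [CommRing R] (A : Matrix n k R) (B : Matrix k n R)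
    (h : IsUnit (B * A).det) : (1 - A * (B * A)⁻¹ * B) * A = 0 := by
  rw [Matrix.sub_mul, Matrix.one_mul, Matrix.mul_assoc (A * _), Matrix.mul_assoc A,
    nonsing_inv_mul _ h, Matrix.mul_one, sub_self]

/-- Equations (13)–(14): with a positive-definite mass matrix and at least one
active full-rank impact constraint, kinetic energy cannot be preserved across
plastic impacts for all pre-impact velocities: some velocity strictly loses
energy. Here `G = Wᵀ M⁻¹ W` and `P = I − M⁻¹ W G⁻¹ Wᵀ`. -/
theorem impact_energy_not_conserved {n k : ℕ} (hk : 1 ≤ k)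
    (M : Matrix (Fin n) (Fin n) ℝ) (hM : M.PosDef)
    (W : Matrix (Fin n) (Fin k) ℝ) (hW : W.rank = k) :
    ∃ v : Fin n → ℝ,
      ((1 - M⁻¹ * W * (Wᵀ * M⁻¹ * W)⁻¹ * Wᵀ) *ᵥ v) ⬝ᵥ
          (M *ᵥ ((1 - M⁻¹ * W * (Wᵀ * M⁻¹ * W)⁻¹ * Wᵀ) *ᵥ v)) <
        v ⬝ᵥ (M *ᵥ v) := by
  have hWinj : Function.Injective W.mulVec :=
    mulVec_injective_of_rank_eq_card (by rw [hW, Fintype.card_fin])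
  have hG : (Wᵀ * M⁻¹ * W).PosDef := by
    simpa only [conjTranspose_eq_transpose_of_trivial] using
      hM.inv.conjTranspose_mul_mul_same hWinj
  have hP : (1 - M⁻¹ * W * (Wᵀ * M⁻¹ * W)⁻¹ * Wᵀ) * (M⁻¹ * W) = 0 := by
    rw [Matrix.mul_assoc Wᵀ] at hG ⊢
    exact one_sub_mul_nonsing_inv_mul_mul_self _ _ ((isUnit_iff_isUnit_det _).mp hG.isUnit)
  set c : Fin k → ℝ := Pi.single ⟨0, hk⟩ 1
  have hv : (M⁻¹ * W) *ᵥ c ≠ 0 := by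
    rw [← mulVec_mulVec]
    refine (mulVec_injective_iff_isUnit.mpr hM.inv.isUnit).ne_iff' (mulVec_zero _) |>.mpr ?_
    exact hWinj.ne_iff' (mulVec_zero _) |>.mpr (by simp [c])
  refine ⟨(M⁻¹ * W) *ᵥ c, ?_⟩
  rw [mulVec_mulVec, hP, zero_mulVec, zero_dotProduct]
  simpa using hM.dotProduct_mulVec_pos hv
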